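/- Let U be a unitary on H satisfying the SSQW conditions and Assumption A. Then there exist families {η₁ˣ, η₂ˣ}_{x∈ℤ}, {ζ₁ˣ, ζ₂ˣ}_{x∈ℤ} where each {η₁ˣ, η₂ˣ} and each {ζ₁ˣ, ζ₂ˣ} is an orthonormal basis of H_x, and an orthonormal basis {ξ₁ˣ, ξ₂ˣ}_{x∈ℤ} of H, such that ξ₁ˣ ∈ ℂη₁ˣ + ℂη₂^{x+1}, ξ₂ˣ ∈ ℂη₁^{x−1} + ℂη₂ˣ, and U = Σ_{x∈ℤ} |ξ₁ˣ⟩⟨ζ₁ˣ| + |ξ₂ˣ⟩⟨ζ₂ˣ| (equivalently, U ζ₁ˣ = ξ₁ˣ and U ζ₂ˣ = ξ₂ˣ for all x ∈ ℤ). -/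

import Mathlib

noncomputable section

/-- `H = ⊕_{x∈ℤ} H_x`, the ℓ² direct sum with each `H_x` a copy of `ℂ²`. -/
abbrev H : Type := lp (fun _ : ℤ × Fin 2 => ℂ) 2

/-- The canonical orthonormal basis vector `eᵢˣ` of `H_x` viewed in `H`. -/
def e (x : ℤ) (i : Fin 2) : H := lp.single 2 (x, i) 1

/-- The subspace `H_x` of `H`. -/
def Hx (x : ℤ) : Submodule ℂ H := Submodule.span ℂ {e x 0, e x 1}

/-- The rank-one operator `|u⟩⟨v| : w ↦ ⟨v, w⟩ u`. -/
def ketbra (u v : H) : H →L[ℂ] H := ((innerSL ℂ) v).smulRight u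

/-- The orthogonal projection of `H` onto `H_x`. -/
def P (x : ℤ) : H →L[ℂ] H := ketbra (e x 0) (e x 0) + ketbra (e x 1) (e x 1)

/-- A unitary (linear isometric equivalence) viewed as a continuous linear map. -/
def clm (U : H ≃ₗᵢ[ℂ] H) : H →L[ℂ] H := U.toLinearIsometry.toContinuousLinearMap

/-- `{u, v}` is an orthonormal basis of the two dimensional space `H_x`. -/
def ONBx (x : ℤ) (u v : H) : Prop :=
  u ∈ Hx x ∧ v ∈ Hx x ∧ ‖u‖ = 1 ∧ ‖v‖ = 1 ∧ (inner ℂ u v : ℂ) = 0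

/-- The SSQW conditions: `U H_x ⊆ H_{x-1} ⊕ H_x ⊕ H_{x+1}` and
`rank(P_{x±1} U P_x) ≤ 1` for all `x`. -/
def SSQW (U : H ≃ₗᵢ[ℂ] H) : Prop :=
  (∀ x : ℤ, ∀ ψ ∈ Hx x, U ψ ∈ Hx (x - 1) ⊔ Hx x ⊔ Hx (x + 1)) ∧
  (∀ x : ℤ, LinearMap.rank (((P (x + 1)).comp ((clm U).comp (P x))).toLinearMap) ≤ 1) ∧
  (∀ x : ℤ, LinearMap.rank (((P (x - 1)).comp ((clm U).comp (P x))).toLinearMap) ≤ 1)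

/-- Assumption A: `U P_y` is never of the form `|v⟩⟨ζ₁| + |w⟩⟨ζ₂|` with
`{ζ₁, ζ₂}` an orthonormal basis of `H_y` and unit vectors `v, w` with either
`v ∈ H_{y-1}, w ∈ H_y` or `v ∈ H_y, w ∈ H_{y+1}`. -/
def AssumptionA (U : H ≃ₗᵢ[ℂ] H) : Prop :=
  ¬ ∃ (y : ℤ) (ζ₁ ζ₂ v w : H), ONBx y ζ₁ ζ₂ ∧ ‖v‖ = 1 ∧ ‖w‖ = 1 ∧
    ((v ∈ Hx (y - 1) ∧ w ∈ Hx y) ∨ (v ∈ Hx y ∧ w ∈ Hx (y + 1))) ∧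
    (clm U).comp (P y) = ketbra v ζ₁ + ketbra w ζ₂

/-!
Two facts about a single cell `x` drive the construction. The maps `P_{x±1} U P_x` have rank at
most one, so each kills a nonzero vector of the two-dimensional `H_x`; and
`P_{x-1} U P_x U⁻¹ P_{x+1} = 0` because `U` and `U⁻¹` move vectors by at most one cell. Together
they give an orthonormal basis `ζ₁ˣ, ζ₂ˣ` of `H_x` with `U ζ₁ˣ ∈ H_x ⊕ H_{x+1}` and
`U ζ₂ˣ ∈ H_{x-1} ⊕ H_x`, and `ξᵢˣ := U ζᵢˣ` is an orthonormal basis of `H`.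

In a cell `H_y` the components of `ξ₁ʸ, ξ₂^{y+1}` are orthogonal to those of `ξ₁^{y-1}, ξ₂ʸ`.
Neither pair of components can vanish: if, say, `ξ₁ʸ` and `ξ₂^{y+1}` have no component in `H_y`,
they form an orthonormal basis of `H_{y+1}`, so `ξ₁^{y+1}` has no component there either and `U`
acts on `H_{y+1}` in a form excluded by Assumption A. Hence both pairs lie on orthogonal lines of
the two-dimensional `H_y`, spanned by `η₁ʸ` and `η₂ʸ`.
-/

open Module Submodule

theorem LinearMap.exists_mem_ne_zero_apply_eq_zero {K V W : Type*} [Field K] [AddCommGroup V]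
    [Module K V] [AddCommGroup W] [Module K W] (T : V →ₗ[K] W) {S : Submodule K V}
    [FiniteDimensional K S] (h : T.rank < finrank K S) : ∃ v ∈ S, v ≠ 0 ∧ T v = 0 := by
  by_contra! hS
  have hinj : Function.Injective (T.comp S.subtype) := by
    rw [← LinearMap.ker_eq_bot, Submodule.eq_bot_iff]
    rintro ⟨v, hv⟩ hTv
    by_contra hne
    exact hS v hv (by simpa using hne) hTv
  have hle := LinearMap.rank_comp_le_left S.subtype T
  rw [(LinearEquiv.ofInjective _ hinj).finrank_eq, finrank_eq_rank] at h
  exact (h.trans_le hle).false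

section TwoDimensional

variable {𝕜 E : Type*} [RCLike 𝕜] [NormedAddCommGroup E] [InnerProductSpace 𝕜 E]
  {K : Submodule 𝕜 E} {a b u v : E}

local notation "⟪" x ", " y "⟫" => inner 𝕜 x y

theorem Submodule.finrank_span_pair_eq_two (hu : ‖u‖ = 1) (hv : ‖v‖ = 1) (huv : ⟪u, v⟫ = 0) :
    finrank 𝕜 (span 𝕜 {u, v}) = 2 := by
  have hon : Orthonormal 𝕜 ![u, v] := by
    rw [orthonormal_iff_ite]
    simp [Fin.forall_fin_two, inner_self_eq_norm_sq_to_K, hu, hv, huv, inner_eq_zero_symm.mp huv]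
  rw [← Matrix.range_cons_cons_empty u v ![], finrank_span_eq_card hon.linearIndependent]
  simp

theorem Submodule.span_pair_eq_of_finrank_eq_two (hK : finrank 𝕜 K = 2) (huK : u ∈ K)
    (hvK : v ∈ K) (hu : ‖u‖ = 1) (hv : ‖v‖ = 1) (huv : ⟪u, v⟫ = 0) : span 𝕜 {u, v} = K := by
  have : FiniteDimensional 𝕜 K := Module.finite_of_finrank_eq_succ hK
  refine eq_of_le_of_finrank_eq (span_le.mpr (Set.insert_subset_iff.mpr ⟨huK, by simpa⟩)) ?_
  rw [hK, finrank_span_pair_eq_two hu hv huv]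

theorem Submodule.starProjection_eq_of_finrank_eq_two [K.HasOrthogonalProjection]
    (hK : finrank 𝕜 K = 2) (huK : u ∈ K) (hvK : v ∈ K) (hu : ‖u‖ = 1) (hv : ‖v‖ = 1)
    (huv : ⟪u, v⟫ = 0) (w : E) : K.starProjection w = ⟪u, w⟫ • u + ⟪v, w⟫ • v := by
  refine eq_starProjection_of_mem_of_inner_eq_zero
    (add_mem (smul_mem _ _ huK) (smul_mem _ _ hvK)) fun k hk => ?_
  rw [← span_pair_eq_of_finrank_eq_two hK huK hvK hu hv huv] at hk
  obtain ⟨c, d, rfl⟩ := mem_span_pair.mp hk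
  have hvu : ⟪v, u⟫ = 0 := inner_eq_zero_symm.mp huv
  simp only [inner_add_right, inner_smul_right, inner_sub_left, inner_add_left, inner_smul_left,
    huv, hvu, inner_self_eq_norm_sq_to_K, hu, hv]
  simp

theorem Submodule.finrank_orthogonal_span_singleton_inf (hK : finrank 𝕜 K = 2) (haK : a ∈ K)
    (ha : a ≠ 0) : finrank 𝕜 ((𝕜 ∙ a)ᗮ ⊓ K : Submodule 𝕜 E) = 1 := by
  have : FiniteDimensional 𝕜 K := Module.finite_of_finrank_eq_succ hK
  exact finrank_add_inf_finrank_orthogonal' ((span_singleton_le_iff_mem a K).mpr haK)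
    (by rw [finrank_span_singleton ha, hK])

theorem Submodule.exists_mem_ne_zero_inner_eq_zero (hK : finrank 𝕜 K = 2) (haK : a ∈ K)
    (ha : a ≠ 0) : ∃ b ∈ K, b ≠ 0 ∧ ⟪a, b⟫ = 0 := by
  have := Module.nontrivial_of_finrank_eq_succ (finrank_orthogonal_span_singleton_inf hK haK ha)
  obtain ⟨⟨b, hb⟩, hb0⟩ := exists_ne (0 : ((𝕜 ∙ a)ᗮ ⊓ K : Submodule 𝕜 E))
  exact ⟨b, hb.2, by simpa using hb0, mem_orthogonal_singleton_iff_inner_right.mp hb.1⟩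

theorem Submodule.mem_span_singleton_of_inner_eq_zero (hK : finrank 𝕜 K = 2) (haK : a ∈ K)
    (hbK : b ∈ K) (ha : a ≠ 0) (hb : b ≠ 0) (hab : ⟪a, b⟫ = 0) (hvK : v ∈ K)
    (hav : ⟪a, v⟫ = 0) : v ∈ 𝕜 ∙ b := by
  let L : Submodule 𝕜 E := (𝕜 ∙ a)ᗮ ⊓ K
  have hbL : b ∈ L := ⟨mem_orthogonal_singleton_iff_inner_right.mpr hab, hbK⟩
  have hvL : v ∈ L := ⟨mem_orthogonal_singleton_iff_inner_right.mpr hav, hvK⟩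
  obtain ⟨c, hc⟩ := (finrank_eq_one_iff_of_nonzero' (⟨b, hbL⟩ : L) (by simpa using hb)).mp
    (finrank_orthogonal_span_singleton_inf hK haK ha) ⟨v, hvL⟩
  exact mem_span_singleton.mpr ⟨c, congrArg Subtype.val hc⟩

theorem Submodule.exists_orthonormal_span_eq (haK : a ∈ K) (hbK : b ∈ K) (ha : a ≠ 0)
    (hb : b ≠ 0) (hab : ⟪a, b⟫ = 0) :
    ∃ η₁ η₂ : E, (η₁ ∈ K ∧ η₂ ∈ K ∧ ‖η₁‖ = 1 ∧ ‖η₂‖ = 1 ∧ ⟪η₁, η₂⟫ = 0) ∧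
      𝕜 ∙ η₁ = 𝕜 ∙ a ∧ 𝕜 ∙ η₂ = 𝕜 ∙ b := by
  have hunit {c : E} (hc : c ≠ 0) : IsUnit (‖c‖⁻¹ : 𝕜) := by simpa using hc
  exact ⟨(‖a‖⁻¹ : 𝕜) • a, (‖b‖⁻¹ : 𝕜) • b,
    ⟨smul_mem _ _ haK, smul_mem _ _ hbK, norm_smul_inv_norm ha, norm_smul_inv_norm hb,
      by simp [inner_smul_left, inner_smul_right, hab]⟩,
    span_singleton_smul_eq (hunit ha) a, span_singleton_smul_eq (hunit hb) b⟩

theorem Submodule.exists_orthonormal_of_orthogonal (hK : finrank 𝕜 K = 2) {S T : Set E}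
    (hSK : S ⊆ K) (hTK : T ⊆ K) (hST : ∀ s ∈ S, ∀ t ∈ T, ⟪s, t⟫ = 0) (hS : ∃ a ∈ S, a ≠ 0)
    (hT : ∃ b ∈ T, b ≠ 0) :
    ∃ η₁ η₂ : E, (η₁ ∈ K ∧ η₂ ∈ K ∧ ‖η₁‖ = 1 ∧ ‖η₂‖ = 1 ∧ ⟪η₁, η₂⟫ = 0) ∧
      S ⊆ 𝕜 ∙ η₁ ∧ T ⊆ 𝕜 ∙ η₂ := by
  obtain ⟨a, haS, ha⟩ := hS
  obtain ⟨b, hbT, hb⟩ := hT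
  have hab := hST a haS b hbT
  obtain ⟨η₁, η₂, hη, h₁, h₂⟩ := exists_orthonormal_span_eq (hSK haS) (hTK hbT) ha hb hab
  refine ⟨η₁, η₂, hη, fun s hs => h₁ ▸ ?_, fun t ht => h₂ ▸ ?_⟩
  · exact mem_span_singleton_of_inner_eq_zero hK (hTK hbT) (hSK haS) hb ha
      (inner_eq_zero_symm.mp hab) (hSK hs) (inner_eq_zero_symm.mp (hST s hs b hbT))
  · exact mem_span_singleton_of_inner_eq_zero hK (hSK haS) (hTK hbT) ha hb hab
      (hTK ht) (hST a haS t ht)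

end TwoDimensional

local notation "⟪" x ", " y "⟫" => inner ℂ x y

theorem inner_e_left (x : ℤ) (i : Fin 2) (w : H) : ⟪e x i, w⟫ = w (x, i) := by
  simp [e, lp.inner_single_left]

theorem ext_of_inner_e {v w : H} (h : ∀ x i, ⟪e x i, v⟫ = ⟪e x i, w⟫) : v = w :=
  lp.ext (funext fun z => by simpa only [inner_e_left] using h z.1 z.2)

theorem inner_e_e (x y : ℤ) (i j : Fin 2) :
    ⟪e x i, e y j⟫ = if (x, i) = (y, j) then 1 else 0 := by
  rw [inner_e_left, e, lp.single_apply]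
  split_ifs <;> simp_all

theorem e_mem (x : ℤ) (i : Fin 2) : e x i ∈ Hx x :=
  subset_span (by fin_cases i <;> simp)

theorem ONBx_e (x : ℤ) : ONBx x (e x 0) (e x 1) :=
  ⟨e_mem x 0, e_mem x 1, by simp [e, lp.norm_single], by simp [e, lp.norm_single],
    by simp [inner_e_e]⟩

theorem ONBx.symm {x : ℤ} {u v : H} (h : ONBx x u v) : ONBx x v u :=
  ⟨h.2.1, h.1, h.2.2.2.1, h.2.2.1, inner_eq_zero_symm.mp h.2.2.2.2⟩

theorem Hx_isOrtho {x y : ℤ} (h : x ≠ y) : Hx x ⟂ Hx y := by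
  simp only [Hx, isOrtho_span, Set.mem_insert_iff, Set.mem_singleton_iff]
  rintro _ (rfl | rfl) _ (rfl | rfl) <;> simp [inner_e_e, h]

theorem finrank_Hx (x : ℤ) : finrank ℂ (Hx x) = 2 :=
  finrank_span_pair_eq_two (ONBx_e x).2.2.1 (ONBx_e x).2.2.2.1 (ONBx_e x).2.2.2.2

instance (x : ℤ) : FiniteDimensional ℂ (Hx x) := Module.finite_of_finrank_eq_succ (finrank_Hx x)

theorem P_eq_starProjection (x : ℤ) : P x = (Hx x).starProjection := by
  ext w
  obtain ⟨h0, h1, hn0, hn1, h01⟩ := ONBx_e x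
  rw [starProjection_eq_of_finrank_eq_two (finrank_Hx x) h0 h1 hn0 hn1 h01]
  rfl

section Projections

variable {x y : ℤ} {u v w : H}

theorem P_eq_of_ONBx (h : ONBx x u v) (w : H) : P x w = ⟪u, w⟫ • u + ⟪v, w⟫ • v := by
  obtain ⟨hu, hv, hnu, hnv, huv⟩ := h
  rw [P_eq_starProjection, starProjection_eq_of_finrank_eq_two (finrank_Hx x) hu hv hnu hnv huv]

theorem P_eq_zero_of_ONBx (h : ONBx x u v) (hu : ⟪u, w⟫ = 0) (hv : ⟪v, w⟫ = 0) : P x w = 0 := by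
  rw [P_eq_of_ONBx h, hu, hv, zero_smul, zero_smul, add_zero]

theorem P_mem (x : ℤ) (w : H) : P x w ∈ Hx x := by
  rw [P_eq_starProjection]; exact starProjection_apply_mem _ w

theorem P_eq_self (hw : w ∈ Hx x) : P x w = w := by
  rw [P_eq_starProjection]; exact starProjection_eq_self_iff.mpr hw

theorem P_eq_zero (hw : w ∈ Hx y) (h : y ≠ x) : P x w = 0 := by
  rw [P_eq_starProjection]; exact (starProjection_apply_eq_zero_iff _).mpr ((Hx_isOrtho h).le hw)

theorem inner_P_left (x : ℤ) (v w : H) : ⟪P x v, w⟫ = ⟪v, P x w⟫ := by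
  rw [P_eq_starProjection]; exact inner_starProjection_left_eq_right _ v w

theorem inner_P_right_of_mem (hv : v ∈ Hx x) (w : H) : ⟪v, P x w⟫ = ⟪v, w⟫ := by
  rw [← inner_P_left, P_eq_self hv]

theorem eq_sum_P {s : Finset ℤ} (hs : ∀ z ∉ s, P z w = 0) : w = ∑ z ∈ s, P z w := by
  refine ext_of_inner_e fun z i => ?_
  have hoff : ∀ y ≠ z, ⟪e z i, P y w⟫ = 0 := fun y hy =>
    (Hx_isOrtho hy.symm).inner_eq (e_mem z i) (P_mem y w)
  rw [inner_sum]
  by_cases hz : z ∈ s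
  · rw [Finset.sum_eq_single_of_mem z hz fun y _ hy => hoff y hy,
      inner_P_right_of_mem (e_mem z i)]
  · rw [Finset.sum_eq_zero fun y hy => hoff y (by rintro rfl; exact hz hy),
      ← inner_P_right_of_mem (e_mem z i), hs z hz, inner_zero_right]

theorem eq_P_add_P_of_mem_sup (h : x ≠ y) (hw : w ∈ Hx x ⊔ Hx y) : w = P x w + P y w := by
  obtain ⟨p, hp, q, hq, rfl⟩ := mem_sup.mp hw
  simp only [map_add, P_eq_self hp, P_eq_self hq, P_eq_zero hp h, P_eq_zero hq h.symm]
  abel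

theorem P_eq_zero_of_mem_sup {a b : ℤ} (ha : a ≠ x) (hb : b ≠ x) (hw : w ∈ Hx a ⊔ Hx b) :
    P x w = 0 := by
  obtain ⟨p, hp, q, hq, rfl⟩ := mem_sup.mp hw
  rw [map_add, P_eq_zero hp ha, P_eq_zero hq hb, add_zero]

theorem mem_of_mem_Hx_sup_of_P_eq_zero {K : Submodule ℂ H} (hK : K ≤ (Hx x)ᗮ)
    (hw : w ∈ Hx x ⊔ K) (h : P x w = 0) : w ∈ K := by
  obtain ⟨p, hp, q, hq, rfl⟩ := mem_sup.mp hw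
  rw [map_add, P_eq_self hp, P_eq_starProjection,
    (starProjection_apply_eq_zero_iff _).mpr (hK hq), add_zero] at h
  simpa [h] using hq

theorem inner_eq_inner_P_of_mem_sup (hv : v ∈ Hx (y - 1) ⊔ Hx y)
    (hw : w ∈ Hx y ⊔ Hx (y + 1)) : ⟪v, w⟫ = ⟪P y v, P y w⟫ := by
  rw [inner_P_right_of_mem (P_mem y v), inner_P_left]
  conv_lhs => rw [eq_P_add_P_of_mem_sup (by omega) hw]
  rw [inner_add_right, ← inner_P_left (y + 1), P_eq_zero_of_mem_sup (by omega) (by omega) hv,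
    inner_zero_left, add_zero]

end Projections

section Walk

variable {U : H ≃ₗᵢ[ℂ] H} {x y z : ℤ} {u v w ξ : H}

theorem inner_map_map_eq_zero_of_ne (U : H ≃ₗᵢ[ℂ] H) (hxy : x ≠ y) (hv : v ∈ Hx x)
    (hw : w ∈ Hx y) : ⟪U v, U w⟫ = 0 := by
  rw [LinearIsometryEquiv.inner_map_map]; exact (Hx_isOrtho hxy).inner_eq hv hw

theorem inner_P_symm_apply (hξ : ξ ∈ Hx y) (hw : w ∈ Hx x) :
    ⟪P x (U.symm ξ), w⟫ = ⟪ξ, P y (U w)⟫ := by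
  rw [inner_P_left, P_eq_self hw, LinearIsometryEquiv.inner_map_eq_flip,
    LinearIsometryEquiv.symm_symm, inner_P_right_of_mem hξ]

theorem exists_mem_Hx_ne_zero_P_apply_eq_zero
    (h : LinearMap.rank ((P y).comp ((clm U).comp (P x))).toLinearMap ≤ 1) :
    ∃ w ∈ Hx x, w ≠ 0 ∧ P y (U w) = 0 := by
  obtain ⟨w, hw, hw0, hTw⟩ := LinearMap.exists_mem_ne_zero_apply_eq_zero _ (S := Hx x)
    (h.trans_lt (by rw [finrank_Hx]; norm_num))
  have hTw : P y (U (P x w)) = 0 := hTw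
  exact ⟨w, hw, hw0, by rwa [P_eq_self hw] at hTw⟩

theorem SSQW.P_apply_eq_zero (hU : SSQW U) (hw : w ∈ Hx x) (hz : 1 < |z - x|) :
    P z (U w) = 0 := by
  rw [lt_abs] at hz
  obtain ⟨p, hp, q, hq, hpq⟩ := mem_sup.mp (hU.1 x w hw)
  rw [← hpq, map_add, P_eq_zero_of_mem_sup (by omega) (by omega) hp, P_eq_zero hq (by omega),
    add_zero]

theorem SSQW.P_symm_apply_eq_zero (hU : SSQW U) (hξ : ξ ∈ Hx y) (hz : 1 < |z - y|) :
    P z (U.symm ξ) = 0 := by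
  rw [P_eq_starProjection, starProjection_apply_eq_zero_iff]
  intro h hh
  rw [← LinearIsometryEquiv.inner_map_eq_flip, ← P_eq_self hξ, ← inner_P_left,
    hU.P_apply_eq_zero hh (by rwa [abs_sub_comm]), inner_zero_left]

theorem SSQW.P_apply_P_symm_apply_eq_zero (hU : SSQW U) (hξ : ξ ∈ Hx (x + 1)) :
    P (x - 1) (U (P x (U.symm ξ))) = 0 := by
  set η := U.symm ξ
  have hη : η = P x η + P (x + 1) η + P (x + 2) η := by
    have := eq_sum_P (w := η) (s := {x, x + 1, x + 2}) fun z hz => by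
      simp only [Finset.mem_insert, Finset.mem_singleton] at hz
      exact hU.P_symm_apply_eq_zero hξ (by rw [lt_abs]; omega)
    rwa [Finset.sum_insert (by simp), Finset.sum_pair (show x + 1 ≠ x + 2 by omega),
      ← add_assoc] at this
  have hsplit := congrArg (fun v => P (x - 1) (U v)) hη
  simp only [map_add, LinearIsometryEquiv.apply_symm_apply, η] at hsplit
  rwa [P_eq_zero hξ (by omega), hU.P_apply_eq_zero (P_mem (x + 1) η) (by rw [lt_abs]; omega),
    hU.P_apply_eq_zero (P_mem (x + 2) η) (by rw [lt_abs]; omega), add_zero, add_zero,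
    eq_comm] at hsplit

theorem SSQW.apply_mem_Hx_sup_Hx_add_one (hU : SSQW U) (hw : w ∈ Hx x)
    (h : P (x - 1) (U w) = 0) : U w ∈ Hx x ⊔ Hx (x + 1) :=
  mem_of_mem_Hx_sup_of_P_eq_zero (sup_le (Hx_isOrtho (by omega)).le (Hx_isOrtho (by omega)).le)
    (by rw [← sup_assoc]; exact hU.1 x w hw) h

theorem SSQW.apply_mem_Hx_sub_one_sup_Hx (hU : SSQW U) (hw : w ∈ Hx x)
    (h : P (x + 1) (U w) = 0) : U w ∈ Hx (x - 1) ⊔ Hx x :=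
  mem_of_mem_Hx_sup_of_P_eq_zero (sup_le (Hx_isOrtho (by omega)).le (Hx_isOrtho (by omega)).le)
    (by rw [sup_comm]; exact hU.1 x w hw) h

theorem SSQW.exists_orthogonal_pair (hU : SSQW U) (x : ℤ) :
    ∃ a ∈ Hx x, ∃ b ∈ Hx x, a ≠ 0 ∧ b ≠ 0 ∧ ⟪a, b⟫ = 0 ∧
      P (x - 1) (U a) = 0 ∧ P (x + 1) (U b) = 0 := by
  obtain ⟨b, hb, hb0, hUb⟩ := exists_mem_Hx_ne_zero_P_apply_eq_zero (hU.2.1 x)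
  obtain ⟨a, ha, ha0, hUa⟩ := exists_mem_Hx_ne_zero_P_apply_eq_zero (hU.2.2 x)
  by_cases hT : ∃ v ∈ Hx x, P (x + 1) (U v) ≠ 0
  · -- Take `a` in the range of `(P_{x+1} U P_x)* = P_x U⁻¹ P_{x+1}`: it is orthogonal to the
    -- kernel vector `b`, and `P_{x-1} U` kills it.
    obtain ⟨v, hv, hv0⟩ := hT
    have hξ := P_mem (x + 1) (U v)
    refine ⟨P x (U.symm (P (x + 1) (U v))), P_mem _ _, b, hb, fun h0 => hv0 ?_, hb0, ?_,
      hU.P_apply_P_symm_apply_eq_zero hξ, hUb⟩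
    · have := inner_P_symm_apply (U := U) hξ hv
      rwa [h0, inner_zero_left, eq_comm, inner_self_eq_zero] at this
    · rw [inner_P_symm_apply (U := U) hξ hb, hUb, inner_zero_right]
  · push Not at hT
    obtain ⟨b', hb', hb'0, hab'⟩ := exists_mem_ne_zero_inner_eq_zero (finrank_Hx x) ha ha0
    exact ⟨a, ha, b', hb', ha0, hb'0, hab', hUa, hT b' hb'⟩

theorem SSQW.exists_ONBx_apply_mem (hU : SSQW U) (x : ℤ) :
    ∃ ζ₁ ζ₂ : H, ONBx x ζ₁ ζ₂ ∧ U ζ₁ ∈ Hx x ⊔ Hx (x + 1) ∧ U ζ₂ ∈ Hx (x - 1) ⊔ Hx x := by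
  obtain ⟨a, ha, b, hb, ha0, hb0, hab, hUa, hUb⟩ := hU.exists_orthogonal_pair x
  obtain ⟨ζ₁, ζ₂, hζ, h₁, h₂⟩ := exists_orthonormal_span_eq ha hb ha0 hb0 hab
  obtain ⟨c₁, rfl⟩ := mem_span_singleton.mp (h₁ ▸ mem_span_singleton_self ζ₁)
  obtain ⟨c₂, rfl⟩ := mem_span_singleton.mp (h₂ ▸ mem_span_singleton_self ζ₂)
  exact ⟨_, _, hζ,
    hU.apply_mem_Hx_sup_Hx_add_one hζ.1 (by rw [map_smul, map_smul, hUa, smul_zero]),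
    hU.apply_mem_Hx_sub_one_sup_Hx hζ.2.1 (by rw [map_smul, map_smul, hUb, smul_zero])⟩

theorem clm_comp_P_of_ONBx (h : ONBx y u v) :
    (clm U).comp (P y) = ketbra (U u) u + ketbra (U v) v := by
  ext w
  simp [clm, ketbra, P_eq_of_ONBx h w]

theorem AssumptionA.not_mem (hA : AssumptionA U) (h : ONBx y u v) :
    ¬((U v ∈ Hx (y - 1) ∧ U u ∈ Hx y) ∨ (U v ∈ Hx y ∧ U u ∈ Hx (y + 1))) := fun hmem =>
  hA ⟨y, v, u, U v, U u, h.symm, by simpa using h.2.2.2.1, by simpa using h.2.2.1, hmem,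
    by rw [clm_comp_P_of_ONBx h, add_comm]⟩

end Walk

def IsAdaptedBasis (U : H ≃ₗᵢ[ℂ] H) (ζ₁ ζ₂ : ℤ → H) : Prop :=
  ∀ x, ONBx x (ζ₁ x) (ζ₂ x) ∧ U (ζ₁ x) ∈ Hx x ⊔ Hx (x + 1) ∧ U (ζ₂ x) ∈ Hx (x - 1) ⊔ Hx x

theorem SSQW.exists_isAdaptedBasis {U : H ≃ₗᵢ[ℂ] H} (hU : SSQW U) :
    ∃ ζ₁ ζ₂ : ℤ → H, IsAdaptedBasis U ζ₁ ζ₂ := by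
  choose ζ₁ ζ₂ h using hU.exists_ONBx_apply_mem
  exact ⟨ζ₁, ζ₂, h⟩

namespace IsAdaptedBasis

variable {U : H ≃ₗᵢ[ℂ] H} {ζ₁ ζ₂ : ℤ → H}

theorem apply_ζ₁_sub_one_mem (hζ : IsAdaptedBasis U ζ₁ ζ₂) (y : ℤ) :
    U (ζ₁ (y - 1)) ∈ Hx (y - 1) ⊔ Hx y := by
  simpa using (hζ (y - 1)).2.1

theorem apply_ζ₂_add_one_mem (hζ : IsAdaptedBasis U ζ₁ ζ₂) (y : ℤ) :
    U (ζ₂ (y + 1)) ∈ Hx y ⊔ Hx (y + 1) := by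
  simpa using (hζ (y + 1)).2.2

theorem P_apply_ne_zero_or_right (hζ : IsAdaptedBasis U ζ₁ ζ₂) (hA : AssumptionA U) (y : ℤ) :
    P y (U (ζ₁ y)) ≠ 0 ∨ P y (U (ζ₂ (y + 1))) ≠ 0 := by
  by_contra! ⟨hu, hs⟩
  have m₁ : U (ζ₁ y) ∈ Hx (y + 1) :=
    mem_of_mem_Hx_sup_of_P_eq_zero (Hx_isOrtho (by omega)).le (hζ y).2.1 hu
  have m₂ : U (ζ₂ (y + 1)) ∈ Hx (y + 1) :=
    mem_of_mem_Hx_sup_of_P_eq_zero (Hx_isOrtho (by omega)).le (hζ.apply_ζ₂_add_one_mem y) hs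
  have hon : ONBx (y + 1) (U (ζ₁ y)) (U (ζ₂ (y + 1))) :=
    ⟨m₁, m₂, by simpa using (hζ y).1.2.2.1, by simpa using (hζ (y + 1)).1.2.2.2.1,
      inner_map_map_eq_zero_of_ne U (by omega) (hζ y).1.1 (hζ _).1.2.1⟩
  have hu' : P (y + 1) (U (ζ₁ (y + 1))) = 0 := P_eq_zero_of_ONBx hon
    (inner_map_map_eq_zero_of_ne U (by omega) (hζ y).1.1 (hζ _).1.1)
    (by rw [LinearIsometryEquiv.inner_map_map]; exact (hζ _).1.symm.2.2.2.2)
  have m₃ : U (ζ₁ (y + 1)) ∈ Hx (y + 1 + 1) :=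
    mem_of_mem_Hx_sup_of_P_eq_zero (Hx_isOrtho (by omega)).le (hζ (y + 1)).2.1 hu'
  exact hA.not_mem (hζ (y + 1)).1 (Or.inr ⟨m₂, m₃⟩)

theorem P_apply_ne_zero_or_left (hζ : IsAdaptedBasis U ζ₁ ζ₂) (hA : AssumptionA U) (y : ℤ) :
    P y (U (ζ₁ (y - 1))) ≠ 0 ∨ P y (U (ζ₂ y)) ≠ 0 := by
  by_contra! ⟨hr, ht⟩
  have m₁ : U (ζ₁ (y - 1)) ∈ Hx (y - 1) := mem_of_mem_Hx_sup_of_P_eq_zero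
    (Hx_isOrtho (by omega)).le (sup_comm (Hx (y - 1)) _ ▸ hζ.apply_ζ₁_sub_one_mem y) hr
  have m₂ : U (ζ₂ y) ∈ Hx (y - 1) := mem_of_mem_Hx_sup_of_P_eq_zero
    (Hx_isOrtho (by omega)).le (sup_comm (Hx (y - 1)) _ ▸ (hζ y).2.2) ht
  have hon : ONBx (y - 1) (U (ζ₁ (y - 1))) (U (ζ₂ y)) :=
    ⟨m₁, m₂, by simpa using (hζ (y - 1)).1.2.2.1, by simpa using (hζ y).1.2.2.2.1,
      inner_map_map_eq_zero_of_ne U (by omega) (hζ _).1.1 (hζ y).1.2.1⟩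
  have ht' : P (y - 1) (U (ζ₂ (y - 1))) = 0 := P_eq_zero_of_ONBx hon
    (by rw [LinearIsometryEquiv.inner_map_map]; exact (hζ _).1.2.2.2.2)
    (inner_map_map_eq_zero_of_ne U (by omega) (hζ y).1.2.1 (hζ _).1.2.1)
  have m₃ : U (ζ₂ (y - 1)) ∈ Hx (y - 1 - 1) := mem_of_mem_Hx_sup_of_P_eq_zero
    (Hx_isOrtho (by omega)).le (sup_comm (Hx (y - 1 - 1)) _ ▸ (hζ (y - 1)).2.2) ht'
  exact hA.not_mem (hζ (y - 1)).1 (Or.inl ⟨m₃, m₁⟩)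

theorem exists_ONBx (hζ : IsAdaptedBasis U ζ₁ ζ₂) (hA : AssumptionA U) (y : ℤ) :
    ∃ η₁ η₂ : H, ONBx y η₁ η₂ ∧
      P y (U (ζ₁ y)) ∈ ℂ ∙ η₁ ∧ P y (U (ζ₂ (y + 1))) ∈ ℂ ∙ η₁ ∧
      P y (U (ζ₁ (y - 1))) ∈ ℂ ∙ η₂ ∧ P y (U (ζ₂ y)) ∈ ℂ ∙ η₂ := by
  have hST : ∀ s ∈ ({P y (U (ζ₁ y)), P y (U (ζ₂ (y + 1)))} : Set H),
      ∀ t ∈ ({P y (U (ζ₁ (y - 1))), P y (U (ζ₂ y))} : Set H), ⟪s, t⟫ = 0 := by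
    simp only [Set.mem_insert_iff, Set.mem_singleton_iff]
    rintro s (rfl | rfl) t (rfl | rfl) <;> rw [inner_eq_zero_symm]
    · rw [← inner_eq_inner_P_of_mem_sup (hζ.apply_ζ₁_sub_one_mem y) (hζ y).2.1]
      exact inner_map_map_eq_zero_of_ne U (by omega) (hζ _).1.1 (hζ y).1.1
    · rw [← inner_eq_inner_P_of_mem_sup (hζ y).2.2 (hζ y).2.1, LinearIsometryEquiv.inner_map_map]
      exact (hζ y).1.symm.2.2.2.2
    · rw [← inner_eq_inner_P_of_mem_sup (hζ.apply_ζ₁_sub_one_mem y) (hζ.apply_ζ₂_add_one_mem y)]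
      exact inner_map_map_eq_zero_of_ne U (by omega) (hζ _).1.1 (hζ _).1.2.1
    · rw [← inner_eq_inner_P_of_mem_sup (hζ y).2.2 (hζ.apply_ζ₂_add_one_mem y)]
      exact inner_map_map_eq_zero_of_ne U (by omega) (hζ y).1.2.1 (hζ _).1.2.1
  obtain ⟨η₁, η₂, hη, hS, hT⟩ := exists_orthonormal_of_orthogonal (finrank_Hx y)
    (by simp [Set.insert_subset_iff, P_mem]) (by simp [Set.insert_subset_iff, P_mem]) hST
    (by rcases hζ.P_apply_ne_zero_or_right hA y with h | h <;> exact ⟨_, by simp, h⟩)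
    (by rcases hζ.P_apply_ne_zero_or_left hA y with h | h <;> exact ⟨_, by simp, h⟩)
  exact ⟨η₁, η₂, hη, hS (by simp), hS (by simp), hT (by simp), hT (by simp)⟩

end IsAdaptedBasis

section Family

variable (U : H ≃ₗᵢ[ℂ] H) {ζ₁ ζ₂ : ℤ → H}

theorem orthonormal_apply_of_ONBx (hζ : ∀ x, ONBx x (ζ₁ x) (ζ₂ x)) :
    Orthonormal ℂ (fun z : ℤ × Fin 2 => if z.2 = 0 then U (ζ₁ z.1) else U (ζ₂ z.1)) := by
  have hmem (x : ℤ) (i : Fin 2) : (if i = 0 then ζ₁ x else ζ₂ x) ∈ Hx x := by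
    split_ifs
    exacts [(hζ x).1, (hζ x).2.1]
  have hF : Orthonormal ℂ (fun z : ℤ × Fin 2 => if z.2 = 0 then ζ₁ z.1 else ζ₂ z.1) := by
    rw [orthonormal_iff_ite]
    rintro ⟨x, i⟩ ⟨y, j⟩
    by_cases hxy : x = y
    · subst hxy
      obtain ⟨-, -, h₁, h₂, h₁₂⟩ := hζ x
      fin_cases i <;> fin_cases j <;>
        simp [inner_self_eq_norm_sq_to_K, h₁, h₂, h₁₂, inner_eq_zero_symm.mp h₁₂]
    · rw [if_neg (show (x, i) ≠ (y, j) from fun h => hxy (congrArg Prod.fst h))]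
      exact (Hx_isOrtho hxy).inner_eq (hmem x i) (hmem y j)
  simpa only [Function.comp_def, apply_ite] using hF.comp_linearIsometryEquiv U

theorem topologicalClosure_span_apply_of_ONBx (hζ : ∀ x, ONBx x (ζ₁ x) (ζ₂ x)) :
    (span ℂ (Set.range fun z : ℤ × Fin 2 =>
      if z.2 = 0 then U (ζ₁ z.1) else U (ζ₂ z.1))).topologicalClosure = ⊤ := by
  rw [topologicalClosure_eq_top_iff, eq_bot_iff]
  intro v hv
  have hv' (z : ℤ × Fin 2) : ⟪if z.2 = 0 then U (ζ₁ z.1) else U (ζ₂ z.1), v⟫ = 0 :=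
    hv _ (subset_span ⟨z, rfl⟩)
  have hP (x : ℤ) : P x (U.symm v) = 0 :=
    P_eq_zero_of_ONBx (hζ x)
      (by rw [← LinearIsometryEquiv.inner_map_eq_flip]; simpa using hv' (x, 0))
      (by rw [← LinearIsometryEquiv.inner_map_eq_flip]; simpa using hv' (x, 1))
  have h0 : U.symm v = 0 := ext_of_inner_e fun x i => by
    rw [← inner_P_right_of_mem (e_mem x i), hP]
  simpa using congrArg U h0

end Family

/-- **Theorem 2.5.** Under the SSQW conditions and Assumption A,
there exist orthonormal bases `{η₁ˣ, η₂ˣ}` and `{ζ₁ˣ, ζ₂ˣ}` of each `H_x` and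
an orthonormal basis `{ξ₁ˣ, ξ₂ˣ}_{x∈ℤ}` of `H` with
`ξ₁ˣ ∈ ℂη₁ˣ + ℂη₂^{x+1}`, `ξ₂ˣ ∈ ℂη₁^{x−1} + ℂη₂ˣ` and
`U = Σ_x |ξ₁ˣ⟩⟨ζ₁ˣ| + |ξ₂ˣ⟩⟨ζ₂ˣ|` (i.e. `U ζᵢˣ = ξᵢˣ`). -/
theorem structure_theorem (U : H ≃ₗᵢ[ℂ] H) (hU : SSQW U) (hA : AssumptionA U) :
    ∃ η₁ η₂ ζ₁ ζ₂ ξ₁ ξ₂ : ℤ → H,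
      (∀ x : ℤ, ONBx x (η₁ x) (η₂ x)) ∧
      (∀ x : ℤ, ONBx x (ζ₁ x) (ζ₂ x)) ∧
      Orthonormal ℂ (fun z : ℤ × Fin 2 => if z.2 = 0 then ξ₁ z.1 else ξ₂ z.1) ∧
      (Submodule.span ℂ
        (Set.range (fun z : ℤ × Fin 2 => if z.2 = 0 then ξ₁ z.1 else ξ₂ z.1))).topologicalClosure
        = ⊤ ∧
      (∀ x : ℤ, ξ₁ x ∈ Submodule.span ℂ {η₁ x} ⊔ Submodule.span ℂ {η₂ (x + 1)}) ∧
      (∀ x : ℤ, ξ₂ x ∈ Submodule.span ℂ {η₁ (x - 1)} ⊔ Submodule.span ℂ {η₂ x}) ∧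
      (∀ x : ℤ, U (ζ₁ x) = ξ₁ x ∧ U (ζ₂ x) = ξ₂ x) := by
  obtain ⟨ζ₁, ζ₂, hζ⟩ := hU.exists_isAdaptedBasis
  choose η₁ η₂ hη hu hs hr ht using hζ.exists_ONBx hA
  refine ⟨η₁, η₂, ζ₁, ζ₂, fun x => U (ζ₁ x), fun x => U (ζ₂ x), hη, fun x => (hζ x).1,
    orthonormal_apply_of_ONBx U fun x => (hζ x).1,
    topologicalClosure_span_apply_of_ONBx U fun x => (hζ x).1, fun x => ?_, fun x => ?_,
    fun x => ⟨rfl, rfl⟩⟩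
  · show U (ζ₁ x) ∈ _
    rw [eq_P_add_P_of_mem_sup (by omega) (hζ x).2.1]
    exact add_mem_sup (hu x) (by simpa using hr (x + 1))
  · show U (ζ₂ x) ∈ _
    rw [eq_P_add_P_of_mem_sup (by omega) (hζ x).2.2]
    exact add_mem_sup (by simpa using hs (x - 1)) (ht x)
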